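/- Let (X,d) be a length space containing points x,y with d(x,y) > 0. If d is a p-metric for some p ∈ [1,∞], then p = 1. In other words, the metric of a nondegenerate length space cannot be a p-metric for any p > 1. -/

import Mathlib

open scoped ENNReal

/-- The `ℓᵖ` norm of a pair of values in `[0,∞]`, `p ∈ [1,∞]`. -/
noncomputable def lpPair (p : ℝ≥0∞) (a b : ℝ≥0∞) : ℝ≥0∞ :=
  if p = ∞ then max a b else (a ^ p.toReal + b ^ p.toReal) ^ (1 / p.toReal)

/-- `X` is a length space: the distance between any two points is the infimum
of the lengths (extended variations) of continuous paths joining them. -/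
def IsLengthSpace (X : Type*) [PseudoEMetricSpace X] : Prop :=
  ∀ x y : X, edist x y =
    ⨅ (f : ℝ → X) (_ : ContinuousOn f (Set.Icc 0 1)) (_ : f 0 = x) (_ : f 1 = y),
      eVariationOn f (Set.Icc 0 1)

/-! A path of finite length `V` from `x` to `y` can be cut, by uniform continuity, into
pieces of steps `dᵢ ≤ δ` with `∑ dᵢ ≤ V`. For a `q`-metric with `1 < q < ∞` this gives
`d(x,y)^q ≤ ∑ dᵢ^q ≤ δ^(q-1) ∑ dᵢ ≤ δ^(q-1) V`, which tends to `0` with `δ`, so `d(x,y) = 0`.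
An ultrametric (`p = ∞`) is a `q`-metric for every finite `q`. -/

open Filter Set Topology

namespace ENNReal

theorem rpow_le_rpow_sub_one_mul {a δ : ℝ≥0∞} {q : ℝ} (hq : 1 ≤ q) (ha : a ≤ δ) :
    a ^ q ≤ δ ^ (q - 1) * a := by
  calc a ^ q = a ^ (q - 1) * a ^ (1 : ℝ) := by
        rw [← rpow_add_of_nonneg _ _ (sub_nonneg.2 hq) zero_le_one, sub_add_cancel]
    _ = a ^ (q - 1) * a := by rw [rpow_one]
    _ ≤ δ ^ (q - 1) * a := by gcongr

theorem max_rpow_le_add (a b : ℝ≥0∞) (q : ℝ) : max a b ^ q ≤ a ^ q + b ^ q := by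
  rcases le_total a b with h | h
  · rw [max_eq_right h]; exact le_add_self
  · rw [max_eq_left h]; exact le_self_add

theorem eq_zero_of_forall_le_rpow_mul {a V : ℝ≥0∞} {r : ℝ} (hr : 0 < r) (hV : V ≠ ∞)
    (h : ∀ δ : ℝ≥0∞, 0 < δ → a ≤ δ ^ r * V) : a = 0 := by
  have hlim : Tendsto (fun n : ℕ => ((n : ℝ≥0∞)⁻¹) ^ r * V) atTop (𝓝 0) := by
    have := ((continuous_rpow_const (y := r)).tendsto 0).comp ENNReal.tendsto_inv_nat_nhds_zero
    simpa [zero_rpow_of_pos hr] using ENNReal.Tendsto.mul_const this (Or.inr hV)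
  exact nonpos_iff_eq_zero.1 <|
    ge_of_tendsto' hlim fun n => h _ (ENNReal.inv_pos.2 (natCast_ne_top n))

end ENNReal

theorem lpPair_top (a b : ℝ≥0∞) : lpPair ∞ a b = max a b := if_pos rfl

theorem lpPair_rpow_toReal {p : ℝ≥0∞} (hp0 : p ≠ 0) (hp : p ≠ ∞) (a b : ℝ≥0∞) :
    lpPair p a b ^ p.toReal = a ^ p.toReal + b ^ p.toReal := by
  rw [lpPair, if_neg hp, ← ENNReal.rpow_mul, one_div,
    inv_mul_cancel₀ (ENNReal.toReal_pos hp0 hp).ne', ENNReal.rpow_one]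

section

variable {X : Type*} [PseudoEMetricSpace X]

theorem exists_one_lt_edist_rpow_le_add_of_lpPair {p : ℝ≥0∞} (hp : 1 < p)
    (hpm : ∀ a b c : X, edist a b ≤ lpPair p (edist a c) (edist c b)) :
    ∃ q : ℝ, 1 < q ∧ ∀ a b c : X, edist a b ^ q ≤ edist a c ^ q + edist c b ^ q := by
  rcases eq_or_ne p ∞ with rfl | hp_top
  -- an ultrametric is a `q`-metric for every finite `q`
  · refine ⟨2, one_lt_two, fun a b c => ?_⟩
    calc edist a b ^ (2 : ℝ) ≤ max (edist a c) (edist c b) ^ (2 : ℝ) := by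
          gcongr; rw [← lpPair_top]; exact hpm a b c
      _ ≤ _ := ENNReal.max_rpow_le_add _ _ _
  · refine ⟨p.toReal, ?_, fun a b c => ?_⟩
    · simpa using (ENNReal.toReal_lt_toReal ENNReal.one_ne_top hp_top).2 hp
    · rw [← lpPair_rpow_toReal (zero_lt_one.trans hp).ne' hp_top]
      gcongr
      exact hpm a b c

theorem edist_rpow_le_sum_of_rpow_triangle {q : ℝ} (hq : 0 < q)
    (h : ∀ a b c : X, edist a b ^ q ≤ edist a c ^ q + edist c b ^ q) (g : ℕ → X) (n : ℕ) :
    edist (g 0) (g n) ^ q ≤ ∑ i ∈ Finset.range n, edist (g i) (g (i + 1)) ^ q := by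
  induction n with
  | zero => simp [ENNReal.zero_rpow_of_pos hq]
  | succ n ih =>
    rw [Finset.sum_range_succ]
    exact (h _ _ (g n)).trans (by gcongr)

theorem IsLengthSpace.exists_path_eVariationOn_lt (hX : IsLengthSpace X) {x y : X}
    {r : ℝ≥0∞} (h : edist x y < r) :
    ∃ f : ℝ → X, ContinuousOn f (Icc 0 1) ∧ f 0 = x ∧ f 1 = y ∧
      eVariationOn f (Icc 0 1) < r := by
  rw [hX x y] at h
  simpa only [iInf_lt_iff, exists_prop] using h

theorem sum_edist_div_nat_le_eVariationOn (f : ℝ → X) (n : ℕ) :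
    ∑ i ∈ Finset.range n, edist (f (i / n)) (f ((i + 1 : ℕ) / n)) ≤
      eVariationOn f (Icc 0 1) := by
  have hmono : MonotoneOn (fun i : ℕ => (i / n : ℝ)) (Icc 0 n) := fun i _ j _ hij => by
    dsimp only; gcongr
  have hmem : ∀ i ∈ Icc 0 n, (i / n : ℝ) ∈ Icc (0 : ℝ) 1 := fun i hi =>
    ⟨by positivity, div_le_one_of_le₀ (by exact_mod_cast hi.2) n.cast_nonneg⟩
  simpa only [Finset.range_eq_Ico, edist_comm] using
    eVariationOn.sum_le_of_monotoneOn_Icc (f := f) hmono hmem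

theorem ContinuousOn.exists_nat_edist_div_nat_le {f : ℝ → X} (hf : ContinuousOn f (Icc 0 1))
    {δ : ℝ≥0∞} (hδ : 0 < δ) :
    ∃ n : ℕ, n ≠ 0 ∧ ∀ i < n, edist (f (i / n)) (f ((i + 1 : ℕ) / n)) ≤ δ := by
  obtain ⟨η, hη, hfη⟩ :=
    EMetric.uniformContinuousOn_iff.1 (isCompact_Icc.uniformContinuousOn_of_continuous hf) δ hδ
  obtain ⟨n, hn⟩ := ENNReal.exists_inv_nat_lt hη.ne'
  have hn0 : n ≠ 0 := by rintro rfl; simp at hn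
  have hnpos : (0 : ℝ) < n := by positivity
  refine ⟨n, hn0, fun i hi => (hfη ?_ ?_ ?_).le⟩
  · exact ⟨by positivity, div_le_one_of_le₀ (by exact_mod_cast hi.le) n.cast_nonneg⟩
  · exact ⟨by positivity, div_le_one_of_le₀ (by exact_mod_cast hi) n.cast_nonneg⟩
  · have : edist (i / n : ℝ) ((i + 1 : ℕ) / n) = (n : ℝ≥0∞)⁻¹ := by
      rw [edist_dist, Real.dist_eq, ← sub_div, abs_div, abs_of_pos hnpos]
      push_cast
      rw [sub_add_cancel_left, abs_neg, abs_one, one_div, ENNReal.ofReal_inv_of_pos hnpos,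
        ENNReal.ofReal_natCast]
    rwa [this]

theorem edist_rpow_le_rpow_mul_eVariationOn {q : ℝ} (hq : 1 < q)
    (h : ∀ a b c : X, edist a b ^ q ≤ edist a c ^ q + edist c b ^ q) {f : ℝ → X}
    (hf : ContinuousOn f (Icc 0 1)) {δ : ℝ≥0∞} (hδ : 0 < δ) :
    edist (f 0) (f 1) ^ q ≤ δ ^ (q - 1) * eVariationOn f (Icc 0 1) := by
  obtain ⟨n, hn, hlinks⟩ := hf.exists_nat_edist_div_nat_le hδ
  have hchain := edist_rpow_le_sum_of_rpow_triangle (zero_lt_one.trans hq) h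
    (fun i : ℕ => f (i / n)) n
  simp only [Nat.cast_zero, zero_div, div_self (Nat.cast_ne_zero.2 hn : (n : ℝ) ≠ 0)] at hchain
  calc edist (f 0) (f 1) ^ q
      ≤ ∑ i ∈ Finset.range n, edist (f (i / n)) (f ((i + 1 : ℕ) / n)) ^ q := hchain
    _ ≤ ∑ i ∈ Finset.range n, δ ^ (q - 1) * edist (f (i / n)) (f ((i + 1 : ℕ) / n)) :=
        Finset.sum_le_sum fun i hi =>
          ENNReal.rpow_le_rpow_sub_one_mul hq.le (hlinks i (Finset.mem_range.1 hi))
    _ = δ ^ (q - 1) * ∑ i ∈ Finset.range n, edist (f (i / n)) (f ((i + 1 : ℕ) / n)) :=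
        (Finset.mul_sum ..).symm
    _ ≤ δ ^ (q - 1) * eVariationOn f (Icc 0 1) := by
        gcongr; exact sum_edist_div_nat_le_eVariationOn f n

end

/-- the metric of a length space containing two points at
positive distance cannot be a `p`-metric for any `p > 1`: if it is a
`p`-metric for some `p ∈ [1,∞]`, then `p = 1`. -/
theorem length_space_p_metric_implies_p_eq_one {X : Type*} [PseudoEMetricSpace X]
    (hX : IsLengthSpace X) {x y : X} (hxy : 0 < edist x y) (hfin : edist x y ≠ ∞)
    (p : ℝ≥0∞) (hp : 1 ≤ p)
    (hpm : ∀ a b c : X, edist a b ≤ lpPair p (edist a c) (edist c b)) :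
    p = 1 := by
  by_contra hp1
  obtain ⟨q, hq, htri⟩ := exists_one_lt_edist_rpow_le_add_of_lpPair (hp.lt_of_ne' hp1) hpm
  obtain ⟨f, hf, rfl, rfl, hV⟩ := hX.exists_path_eVariationOn_lt hfin.lt_top
  have hzero : edist (f 0) (f 1) ^ q = 0 :=
    ENNReal.eq_zero_of_forall_le_rpow_mul (sub_pos.2 hq) hV.ne fun δ hδ =>
      edist_rpow_le_rpow_mul_eVariationOn hq htri hf hδ
  exact hxy.ne' (ENNReal.rpow_eq_zero_iff_of_pos (zero_lt_one.trans hq) |>.1 hzero)
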